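/- arXiv:2604.17367 — 5 statements merged into one kernel-verified Lean document; each statement's English description precedes it below -/
import Mathlib

section
/- Let n ≥ 2 be an integer, λ ≤ 0, a ≥ 0, and let I ⊆ (0,∞) be an interval. Let u, v : I → ℝ with u differentiable, and let ρ, K : I → ℝ satisfy ρ ≥ 0 on I and v(r) + a ≥ −ρ(r) for all r ∈ I. Assume the Bochner-type inequality u'(r) + (u(r)+v(r))²/(n−1) ≤ −(n−1)λ + K(r) for all r ∈ I. Define ψ := u − h_λ − a on I. Then at every point r ∈ I where ψ(r) > 0 one has ψ'(r) + ψ(r)²/(n−1) ≤ −2(sn_λ'(r)/sn_λ(r))·ψ(r) + (2/(n−1))·ρ(r)·ψ(r) + 2(sn_λ'(r)/sn_λ(r))·ρ(r) + K(r). -/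
/-- The model function `sn_λ`: `sn_λ(r) = r` if `λ = 0`,
`sin(√λ r)/√λ` if `λ > 0`, `sinh(√(−λ) r)/√(−λ)` if `λ < 0`. -/
noncomputable def sn (l : ℝ) (r : ℝ) : ℝ :=
  if l = 0 then r
  else if 0 < l then Real.sin (Real.sqrt l * r) / Real.sqrt l
  else Real.sinh (Real.sqrt (-l) * r) / Real.sqrt (-l)

/-- The logarithmic derivative `sn_λ'(r)/sn_λ(r)`. -/
noncomputable def snQuot (l : ℝ) (r : ℝ) : ℝ := deriv (sn l) r / sn l r

/-- The model mean curvature `h_λ(r) = (n−1)·sn_λ'(r)/sn_λ(r)`. -/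
noncomputable def hModel (n : ℕ) (l : ℝ) (r : ℝ) : ℝ := ((n : ℝ) - 1) * snQuot l r

lemma sq_bound (s p w : ℝ) (hs : 0 < s) (hp : 0 ≤ p) (hw : s - p ≤ w) :
    s^2 - 2*s*p ≤ w^2 := by
  rcases le_or_gt s (2*p) with h | h
  · nlinarith [sq_nonneg w, mul_nonneg hs.le (by linarith : (0:ℝ) ≤ 2*p - s)]
  · have h1 : 0 ≤ s - p := by linarith
    have h2 : (s - p)^2 ≤ w^2 := by nlinarith
    nlinarith [sq_nonneg p]

lemma snQuot_key (l : ℝ) (hl : l ≤ 0) (r : ℝ) (hr : 0 < r) :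
    0 < snQuot l r ∧ HasDerivAt (snQuot l) (-l - (snQuot l r)^2) r := by
  rcases eq_or_lt_of_le hl with h0 | hneg
  · subst h0
    have hsn : sn 0 = fun x : ℝ => x := by funext x; simp [sn]
    have hq : snQuot 0 = fun x : ℝ => 1 / x := by
      funext x; simp [snQuot, hsn]
    constructor
    · rw [hq]; positivity
    · rw [hq]
      have h := hasDerivAt_inv hr.ne'
      have h2 : HasDerivAt (fun x : ℝ => 1 / x) (-(r^2)⁻¹) r := by
        simpa [one_div] using h
      convert h2 using 1
      field_simp
      ring
  · set c := Real.sqrt (-l) with hc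
    have hcpos : 0 < c := Real.sqrt_pos.mpr (by linarith)
    have hc2 : c^2 = -l := Real.sq_sqrt (by linarith)
    have hsn : sn l = fun x : ℝ => Real.sinh (c * x) / c := by
      funext x; simp [sn, hneg.ne, not_lt.mpr hl, hc]
    have hdsinh : ∀ x : ℝ, HasDerivAt (fun y : ℝ => Real.sinh (c * y)) (Real.cosh (c * x) * c) x := by
      intro x
      have h0 : HasDerivAt (fun y : ℝ => c * y) c x := by
        simpa using (hasDerivAt_id x).const_mul c
      exact (Real.hasDerivAt_sinh (c * x)).comp x h0
    have hd : ∀ x : ℝ, HasDerivAt (sn l) (Real.cosh (c * x)) x := by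
      intro x
      rw [hsn]
      have := (hdsinh x).div_const c
      exact this.congr_deriv (mul_div_cancel_right₀ _ hcpos.ne')
    have hq : snQuot l = fun x : ℝ => c * Real.cosh (c * x) / Real.sinh (c * x) := by
      funext x
      show deriv (sn l) x / sn l x = _
      rw [(hd x).deriv, hsn]
      rw [div_div_eq_mul_div]
      ring_nf
    have hS : 0 < Real.sinh (c * r) := Real.sinh_pos_iff.mpr (by positivity)
    constructor
    · rw [hq]
      have := Real.cosh_pos (x := c * r)
      positivity
    · rw [hq]
      have h0 : HasDerivAt (fun y : ℝ => c * y) c r := by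
        simpa using (hasDerivAt_id r).const_mul c
      have h1 : HasDerivAt (fun x : ℝ => c * Real.cosh (c * x)) (c * (Real.sinh (c * r) * c)) r := by
        have := ((Real.hasDerivAt_cosh (c * r)).comp r h0).const_mul c
        simpa [Function.comp] using this
      have h := h1.div (hdsinh r) hS.ne'
      refine h.congr_deriv (Eq.symm ?_)
      have hcs := Real.cosh_sq_sub_sinh_sq (c * r)
      field_simp
      nlinarith [hcs, hc2, sq_nonneg (Real.sinh (c*r))]

/-- Riccati-type inequality (analytic core of Lemma 2.1): with `ψ := u − h_λ − a`,
the Bochner-type inequality for `u` implies the Riccati-type inequality for `ψ`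
at every point of the interval `I ⊆ (0,∞)` where `ψ > 0`. -/
theorem stmt0 (n : ℕ) (hn : 2 ≤ n) (l a : ℝ) (hl : l ≤ 0) (ha : 0 ≤ a)
    (I : Set ℝ) (hI : I.OrdConnected) (hIpos : I ⊆ Set.Ioi 0)
    (u v ρ K : ℝ → ℝ)
    (hu : ∀ r ∈ I, DifferentiableAt ℝ u r)
    (hρ : ∀ r ∈ I, 0 ≤ ρ r)
    (hv : ∀ r ∈ I, -ρ r ≤ v r + a)
    (hBochner : ∀ r ∈ I,
      deriv u r + (u r + v r) ^ 2 / ((n : ℝ) - 1) ≤ -((n : ℝ) - 1) * l + K r)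
    (ψ : ℝ → ℝ) (hψ : ψ = fun r => u r - hModel n l r - a) :
    ∀ r ∈ I, 0 < ψ r →
      deriv ψ r + (ψ r) ^ 2 / ((n : ℝ) - 1) ≤
        -2 * snQuot l r * ψ r + 2 / ((n : ℝ) - 1) * ρ r * ψ r
          + 2 * snQuot l r * ρ r + K r := by
  intro r hr hpos
  have hr0 : 0 < r := hIpos hr
  obtain ⟨hqpos, hqd⟩ := snQuot_key l hl r hr0
  set m : ℝ := (n : ℝ) - 1 with hm
  have hm1 : (1:ℝ) ≤ m := by
    have : (2:ℝ) ≤ (n:ℝ) := by exact_mod_cast hn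
    simp [hm]; linarith
  have hmpos : (0:ℝ) < m := by linarith
  set q : ℝ := snQuot l r with hqdef
  have hψd : HasDerivAt ψ (deriv u r - m * (-l - q^2)) r := by
    rw [hψ]
    simp only [hModel]
    exact (((hu r hr).hasDerivAt).sub (hqd.const_mul m)).sub_const a
  have hψr : ψ r = u r - m * q - a := by rw [hψ]; simp [hModel]; rfl
  rw [hψd.deriv, hψr]
  set t : ℝ := u r - m * q - a with ht
  have htpos : 0 < t := by rwa [hψr] at hpos
  set w : ℝ := u r + v r with hw
  set s : ℝ := t + m * q with hs
  have hspos : 0 < s := by have := mul_pos hmpos hqpos; simp [hs]; linarith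
  have hwge : s - ρ r ≤ w := by
    have := hv r hr
    simp only [hs, ht, hw]; linarith
  have hkey : s^2 - 2*s*ρ r ≤ w^2 := sq_bound s (ρ r) w hspos (hρ r hr) hwge
  have hB := hBochner r hr
  have hnum : t^2 - w^2 - 2*ρ r*t ≤ -2*m*q*t - m^2*q^2 + 2*m*q*ρ r := by rw [hs] at hkey; nlinarith [hkey]
  have hdiv : (t^2 - w^2 - 2*ρ r*t)/m ≤ (-2*m*q*t - m^2*q^2 + 2*m*q*ρ r)/m := by gcongr
  have hrhs : (-2*m*q*t - m^2*q^2 + 2*m*q*ρ r)/m = -2*q*t - m*q^2 + 2*q*ρ r := by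
    field_simp
  have e1 : t^2/m - w^2/m - 2/m*ρ r*t = (t^2 - w^2 - 2*ρ r*t)/m := by ring
  have hexp : deriv u r - m*(-l - q^2) = deriv u r + m*l + m*q^2 := by ring
  rw [hrhs] at hdiv
  linarith [hB, hdiv, e1, hexp]
end

section
/- Let (X,d) be a metric space, μ a Borel measure on X, x ∈ X, and let κ > 0, l > 0, R₀ > 0 satisfy μ(B(x,r)) ≤ κ·r^l for all 0 < r ≤ R₀. Let 0 < p < l and q > lp/(l−p). Then there is a constant C depending only on p, q, κ, l such that for every a ≥ 0, every 0 < R ≤ R₀, and every measurable φ : X → [0,∞), one has (∫_{B(x,R)} (φ(y)^p/d(x,y)^p)·e^{−a·d(x,y)} dμ(y))^{1/(2p)} ≤ C·R^{l/(2p) − l/(2q) − 1/2}·(∫_{B(x,R)} φ(y)^q·e^{−a·d(x,y)} dμ(y))^{1/(2q)}. -/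
open MeasureTheory
open scoped ENNReal NNReal

lemma aux_singleton {X : Type*} [MetricSpace X] [MeasurableSpace X] [BorelSpace X]
    (μ : Measure X) (x : X) (κ l R₀ : ℝ) (hκ : 0 < κ) (hl : 0 < l) (hR₀ : 0 < R₀)
    (hvol : ∀ r : ℝ, 0 < r → r ≤ R₀ →
      μ (Metric.ball x r) ≤ ENNReal.ofReal (κ * r ^ l)) :
    μ {x} = 0 := by
  have key : ∀ r : ℝ, 0 < r → r ≤ R₀ → μ {x} ≤ ENNReal.ofReal (κ * r ^ l) := by
    intro r hr hrR
    refine le_trans (measure_mono ?_) (hvol r hr hrR)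
    simp [Set.singleton_subset_iff, Metric.mem_ball, hr]
  have h0 : μ {x} ≤ 0 := by
    refine ENNReal.le_of_forall_pos_le_add (fun ε hε _ => ?_)
    rw [zero_add]
    set r : ℝ := min R₀ (((ε : ℝ) / κ) ^ (1 / l)) with hr
    have hεκ : 0 < (ε : ℝ) / κ := div_pos hε hκ
    have hr0 : 0 < r := lt_min hR₀ (Real.rpow_pos_of_pos hεκ _)
    have hrl : r ^ l ≤ (ε : ℝ) / κ := by
      calc r ^ l ≤ (((ε : ℝ) / κ) ^ (1 / l)) ^ l :=
            Real.rpow_le_rpow hr0.le (min_le_right _ _) hl.le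
        _ = (ε : ℝ) / κ := by
            rw [← Real.rpow_mul hεκ.le, one_div, inv_mul_cancel₀ hl.ne', Real.rpow_one]
    calc μ {x} ≤ ENNReal.ofReal (κ * r ^ l) := key r hr0 (min_le_left _ _)
      _ ≤ ENNReal.ofReal (ε : ℝ) := by
          refine ENNReal.ofReal_le_ofReal ?_
          calc κ * r ^ l ≤ κ * ((ε : ℝ) / κ) := by nlinarith
            _ = ε := by field_simp
      _ = (ε : ℝ≥0∞) := ENNReal.ofReal_coe_nnreal
  exact le_antisymm h0 zero_le

lemma aux_dist_int {X : Type*} [MetricSpace X] [MeasurableSpace X] [BorelSpace X]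
    (μ : Measure X) (x : X) (κ l R₀ : ℝ) (hκ : 0 < κ) (hl : 0 < l) (hR₀ : 0 < R₀)
    (hvol : ∀ r : ℝ, 0 < r → r ≤ R₀ →
      μ (Metric.ball x r) ≤ ENNReal.ofReal (κ * r ^ l))
    (hx0 : μ {x} = 0)
    (s : ℝ) (hs0 : 0 < s) (hsl : s < l) (R : ℝ) (hR : 0 < R) (hRR₀ : R ≤ R₀) :
    ∫⁻ y in Metric.ball x R, (ENNReal.ofReal (dist x y))⁻¹ ^ s ∂μ
      ≤ ENNReal.ofReal (κ * 2 ^ s / (1 - 2 ^ (s - l)) * R ^ (l - s)) := by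
  have h2 : (0:ℝ) < 2 := two_pos
  set θ : ℝ := (2:ℝ) ^ (s - l) with hθdef
  have hθ0 : 0 < θ := Real.rpow_pos_of_pos h2 _
  have hθ1 : θ < 1 := Real.rpow_lt_one_of_one_lt_of_neg one_lt_two (by linarith)
  set c : ℝ := κ * 2 ^ s * R ^ (l - s) with hcdef
  have hc0 : 0 < c := by positivity
  set A : ℕ → Set X := fun n => Metric.ball x (R / 2 ^ n) \ Metric.ball x (R / 2 ^ (n + 1))
    with hAdef
  -- step 1: drop the point x
  have heq : ∫⁻ y in Metric.ball x R, (ENNReal.ofReal (dist x y))⁻¹ ^ s ∂μ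
      = ∫⁻ y in Metric.ball x R \ {x}, (ENNReal.ofReal (dist x y))⁻¹ ^ s ∂μ := by
    refine (setLIntegral_congr ?_).symm
    refine MeasureTheory.diff_ae_eq_self.mpr ?_
    exact measure_mono_null Set.inter_subset_right hx0
  -- step 2: cover by annuli
  have hsub : Metric.ball x R \ {x} ⊆ ⋃ n, A n := by
    rintro y ⟨hyR, hyx⟩
    have hyx' : y ≠ x := hyx
    have hd0 : 0 < dist x y := dist_pos.mpr (Ne.symm hyx')
    have hdR : dist x y < R := by rw [dist_comm]; exact Metric.mem_ball.mp hyR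
    have hex : ∃ n : ℕ, R / 2 ^ (n + 1) ≤ dist x y := by
      obtain ⟨n, hn⟩ := pow_unbounded_of_one_lt (R / dist x y) (one_lt_two (α := ℝ))
      refine ⟨n, le_of_lt ?_⟩
      have h1 : R / 2 ^ n < dist x y := by
        rw [div_lt_iff₀ (by positivity)]
        rw [div_lt_iff₀ hd0] at hn
        linarith
      have h2' : R / 2 ^ (n + 1) ≤ R / 2 ^ n := by
        rw [div_le_div_iff₀ (by positivity) (by positivity), pow_succ]
        nlinarith [pow_pos (two_pos : (0:ℝ) < 2) n]
      linarith
    refine Set.mem_iUnion.mpr ⟨Nat.find hex, ?_, ?_⟩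
    · show y ∈ Metric.ball x (R / 2 ^ Nat.find hex)
      rw [Metric.mem_ball, dist_comm]
      rcases Nat.eq_zero_or_pos (Nat.find hex) with h0 | hpos
      · rw [h0]; simpa using hdR
      · obtain ⟨m, hm⟩ := Nat.exists_eq_succ_of_ne_zero hpos.ne'
        have hmin := Nat.find_min hex (m := m) (by omega)
        rw [hm]
        push_neg at hmin
        exact hmin
    · show y ∉ Metric.ball x (R / 2 ^ (Nat.find hex + 1))
      rw [Metric.mem_ball, dist_comm, not_lt]
      exact Nat.find_spec hex
  -- step 3: termwise estimate
  have hterm : ∀ n : ℕ, ∫⁻ y in A n, (ENNReal.ofReal (dist x y))⁻¹ ^ s ∂μ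
      ≤ ENNReal.ofReal c * ENNReal.ofReal θ ^ n := by
    intro n
    have hrn0 : (0:ℝ) < R / 2 ^ n := by positivity
    have hrn'0 : (0:ℝ) < R / 2 ^ (n + 1) := by positivity
    have hbd : ∀ y ∈ A n, (ENNReal.ofReal (dist x y))⁻¹ ^ s
        ≤ ENNReal.ofReal ((R / 2 ^ (n + 1)) ^ (-s)) := by
      intro y hy
      have hdy : R / 2 ^ (n + 1) ≤ dist x y := by
        have := hy.2
        rw [Metric.mem_ball, dist_comm, not_lt] at this
        exact this
      calc (ENNReal.ofReal (dist x y))⁻¹ ^ s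
          = ((ENNReal.ofReal (dist x y)) ^ s)⁻¹ := ENNReal.inv_rpow _ _
        _ ≤ ((ENNReal.ofReal (R / 2 ^ (n + 1))) ^ s)⁻¹ := by
            exact ENNReal.inv_le_inv.mpr
              (ENNReal.rpow_le_rpow (ENNReal.ofReal_le_ofReal hdy) hs0.le)
        _ = (ENNReal.ofReal ((R / 2 ^ (n + 1)) ^ s))⁻¹ := by
            rw [ENNReal.ofReal_rpow_of_pos hrn'0]
        _ = ENNReal.ofReal (((R / 2 ^ (n + 1)) ^ s)⁻¹) := by
            rw [ENNReal.ofReal_inv_of_pos (Real.rpow_pos_of_pos hrn'0 _)]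
        _ = ENNReal.ofReal ((R / 2 ^ (n + 1)) ^ (-s)) := by
            rw [Real.rpow_neg hrn'0.le]
    have hμA : μ (A n) ≤ ENNReal.ofReal (κ * (R / 2 ^ n) ^ l) := by
      refine le_trans (measure_mono Set.diff_subset) (hvol _ hrn0 ?_)
      calc R / 2 ^ n ≤ R := by
            rw [div_le_iff₀ (by positivity)]
            nlinarith [one_le_pow₀ (one_le_two : (1:ℝ) ≤ 2) (n := n)]
        _ ≤ R₀ := hRR₀
    have hdivpow : ∀ (m : ℕ) (t : ℝ), (R / 2 ^ m) ^ t = R ^ t * (2:ℝ) ^ (-(m : ℝ) * t) := by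
      intro m t
      rw [div_eq_mul_inv, Real.mul_rpow hR.le (by positivity), ← Real.rpow_natCast 2 m,
        ← Real.rpow_neg h2.le, ← Real.rpow_mul h2.le]
    calc ∫⁻ y in A n, (ENNReal.ofReal (dist x y))⁻¹ ^ s ∂μ
        ≤ ∫⁻ _ in A n, ENNReal.ofReal ((R / 2 ^ (n + 1)) ^ (-s)) ∂μ :=
          setLIntegral_mono measurable_const hbd
      _ = ENNReal.ofReal ((R / 2 ^ (n + 1)) ^ (-s)) * μ (A n) := setLIntegral_const _ _
      _ ≤ ENNReal.ofReal ((R / 2 ^ (n + 1)) ^ (-s)) * ENNReal.ofReal (κ * (R / 2 ^ n) ^ l) :=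
          mul_le_mul_right hμA _
      _ = ENNReal.ofReal ((R / 2 ^ (n + 1)) ^ (-s) * (κ * (R / 2 ^ n) ^ l)) :=
          (ENNReal.ofReal_mul (Real.rpow_nonneg hrn'0.le _)).symm
      _ = ENNReal.ofReal (c * θ ^ n) := by
          congr 1
          rw [hdivpow, hdivpow, hcdef, hθdef, ← Real.rpow_natCast ((2:ℝ) ^ (s - l)) n,
            ← Real.rpow_mul h2.le,
            show R ^ (l - s) = R ^ (-s) * R ^ l from by
              rw [← Real.rpow_add hR]; congr 1; ring]
          have e1 : (2:ℝ) ^ (-((n+1 : ℕ):ℝ) * -s) * 2 ^ (-(n:ℝ) * l)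
              = 2 ^ (s + (s-l)*(n:ℝ)) := by
            rw [← Real.rpow_add h2]; congr 1; push_cast; ring
          have e2 : (2:ℝ) ^ s * 2 ^ ((s-l)*(n:ℝ)) = 2 ^ (s + (s-l)*(n:ℝ)) := by
            rw [← Real.rpow_add h2]
          calc R ^ (-s) * 2 ^ (-((n+1 : ℕ):ℝ) * -s) * (κ * (R ^ l * 2 ^ (-(n:ℝ) * l)))
              = R ^ (-s) * R ^ l * κ
                  * ((2:ℝ) ^ (-((n+1 : ℕ):ℝ) * -s) * 2 ^ (-(n:ℝ) * l)) := by ring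
            _ = R ^ (-s) * R ^ l * κ * ((2:ℝ) ^ s * 2 ^ ((s-l)*(n:ℝ))) := by rw [e1, e2]
            _ = κ * 2 ^ s * (R ^ (-s) * R ^ l) * 2 ^ ((s-l)*(n:ℝ)) := by ring
      _ = ENNReal.ofReal c * ENNReal.ofReal θ ^ n := by
          rw [ENNReal.ofReal_mul hc0.le, ENNReal.ofReal_pow hθ0.le]
  -- step 4: sum up
  calc ∫⁻ y in Metric.ball x R, (ENNReal.ofReal (dist x y))⁻¹ ^ s ∂μ
      = ∫⁻ y in Metric.ball x R \ {x}, (ENNReal.ofReal (dist x y))⁻¹ ^ s ∂μ := heq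
    _ ≤ ∫⁻ y in ⋃ n, A n, (ENNReal.ofReal (dist x y))⁻¹ ^ s ∂μ := lintegral_mono_set hsub
    _ ≤ ∑' n, ∫⁻ y in A n, (ENNReal.ofReal (dist x y))⁻¹ ^ s ∂μ := lintegral_iUnion_le _ _
    _ ≤ ∑' n, ENNReal.ofReal c * ENNReal.ofReal θ ^ n := ENNReal.tsum_le_tsum hterm
    _ = ENNReal.ofReal c * (1 - ENNReal.ofReal θ)⁻¹ := by
        rw [ENNReal.tsum_mul_left, ENNReal.tsum_geometric]
    _ = ENNReal.ofReal c * ENNReal.ofReal ((1 - θ)⁻¹) := by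
        rw [← ENNReal.ofReal_one, ← ENNReal.ofReal_sub _ hθ0.le,
          ENNReal.ofReal_inv_of_pos (by linarith)]
    _ = ENNReal.ofReal (κ * 2 ^ s / (1 - 2 ^ (s - l)) * R ^ (l - s)) := by
        rw [← ENNReal.ofReal_mul hc0.le]
        congr 1
        rw [hcdef, hθdef]
        ring

/-- Lemma 3.2 in metric-measure form: under the volume growth bound
`μ(B(x,r)) ≤ κ r^l` for `0 < r ≤ R₀`, for `0 < p < l` and `q > lp/(l−p)` there
is a constant `C = C(p,q,κ,l)` such that for all `a ≥ 0`, `0 < R ≤ R₀` and all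
measurable `φ ≥ 0`,
`(∫_{B(x,R)} φ^p/d(x,·)^p · e^{−a d(x,·)} dμ)^(1/2p)
  ≤ C · R^(l/2p − l/2q − 1/2) · (∫_{B(x,R)} φ^q e^{−a d(x,·)} dμ)^(1/2q)`. -/
theorem stmt3 {X : Type*} [MetricSpace X] [MeasurableSpace X] [BorelSpace X]
    (μ : Measure X) (x : X) (κ l R₀ : ℝ) (hκ : 0 < κ) (hl : 0 < l) (hR₀ : 0 < R₀)
    (hvol : ∀ r : ℝ, 0 < r → r ≤ R₀ →
      μ (Metric.ball x r) ≤ ENNReal.ofReal (κ * r ^ l))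
    (p q : ℝ) (hp0 : 0 < p) (hpl : p < l) (hq : l * p / (l - p) < q) :
    ∃ C : ℝ, 0 < C ∧
      ∀ a : ℝ, 0 ≤ a → ∀ R : ℝ, 0 < R → R ≤ R₀ →
      ∀ φ : X → ℝ, Measurable φ → (∀ y, 0 ≤ φ y) →
        (∫⁻ y in Metric.ball x R,
            ENNReal.ofReal (φ y ^ p / dist x y ^ p * Real.exp (-a * dist x y)) ∂μ)
              ^ (1 / (2 * p))
          ≤ ENNReal.ofReal (C * R ^ (l / (2 * p) - l / (2 * q) - 1 / 2)) *
            (∫⁻ y in Metric.ball x R,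
                ENNReal.ofReal (φ y ^ q * Real.exp (-a * dist x y)) ∂μ)
              ^ (1 / (2 * q)) := by
  have hlp : 0 < l - p := by linarith
  have hplq : 0 < l * p / (l - p) := by positivity
  have hq0 : 0 < q := lt_trans hplq hq
  have hpq : p < q := by
    have : p < l * p / (l - p) := by
      rw [lt_div_iff₀ hlp]; nlinarith
    linarith
  have hqp0 : 0 < q - p := by linarith
  set s : ℝ := p * q / (q - p) with hsdef
  have hs0 : 0 < s := by positivity
  have hsl : s < l := by
    rw [hsdef, div_lt_iff₀ hqp0]
    rw [div_lt_iff₀ hlp] at hq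
    nlinarith
  have hθ1 : (2:ℝ) ^ (s - l) < 1 :=
    Real.rpow_lt_one_of_one_lt_of_neg one_lt_two (by linarith)
  have hθ0 : (0:ℝ) < 2 ^ (s - l) := Real.rpow_pos_of_pos two_pos _
  set C₀ : ℝ := κ * 2 ^ s / (1 - 2 ^ (s - l)) with hC₀def
  have hC₀0 : 0 < C₀ := by
    apply div_pos (by positivity) (by linarith)
  refine ⟨C₀ ^ (1 / (2 * s)), Real.rpow_pos_of_pos hC₀0 _, ?_⟩
  intro a ha R hR hRR₀ φ hφm hφ0
  have hx0 : μ {x} = 0 := aux_singleton μ x κ l R₀ hκ hl hR₀ hvol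
  have hconj : Real.HolderConjugate (q / p) (s / p) := by
    rw [Real.holderConjugate_iff]
    constructor
    · rw [lt_div_iff₀ hp0]; linarith
    · rw [hsdef]
      field_simp
      ring
  set g : X → ℝ≥0∞ := fun y => ENNReal.ofReal (φ y ^ q * Real.exp (-a * dist x y)) with hgdef
  set h : X → ℝ≥0∞ := fun y => (ENNReal.ofReal (dist x y))⁻¹ ^ s with hhdef
  have hdc : Continuous fun y : X => dist x y := continuous_const.dist continuous_id
  have hgm : Measurable g := by
    apply ENNReal.measurable_ofReal.comp
    exact (hφm.pow measurable_const).mul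
      (Real.continuous_exp.measurable.comp ((continuous_const.mul hdc).measurable))
  have hhm : Measurable h :=
    (ENNReal.measurable_ofReal.comp hdc.measurable).inv.pow measurable_const
  -- pointwise bound
  have hpt : ∀ y : X,
      ENNReal.ofReal (φ y ^ p / dist x y ^ p * Real.exp (-a * dist x y))
        ≤ g y ^ (p / q) * h y ^ (p / s) := by
    intro y
    by_cases hyx : y = x
    · subst hyx
      simp [Real.zero_rpow hp0.ne']
    · have hd : 0 < dist x y := dist_pos.mpr (Ne.symm hyx)
      have hgy : g y ^ (p / q) =
          ENNReal.ofReal (φ y ^ p * Real.exp (-a * dist x y) ^ (p / q)) := by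
        rw [hgdef]
        rw [ENNReal.ofReal_rpow_of_nonneg
            (mul_nonneg (Real.rpow_nonneg (hφ0 y) _) (Real.exp_pos _).le) (by positivity),
          Real.mul_rpow (Real.rpow_nonneg (hφ0 y) _) (Real.exp_pos _).le,
          ← Real.rpow_mul (hφ0 y), show q * (p / q) = p from by field_simp]
      have hhy : h y ^ (p / s) = ENNReal.ofReal ((dist x y ^ p)⁻¹) := by
        rw [hhdef]
        rw [← ENNReal.rpow_mul, show s * (p / s) = p from by field_simp,
          ENNReal.inv_rpow, ENNReal.ofReal_rpow_of_pos hd,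
          ← ENNReal.ofReal_inv_of_pos (Real.rpow_pos_of_pos hd _)]
      have hee : Real.exp (-a * dist x y) ≤ Real.exp (-a * dist x y) ^ (p / q) := by
        rw [← Real.exp_mul]
        apply Real.exp_le_exp.mpr
        have h1 : p / q ≤ 1 := by rw [div_le_one hq0]; linarith
        have h2 : 0 ≤ a * dist x y := mul_nonneg ha dist_nonneg
        have h3 : 0 < p / q := by positivity
        nlinarith
      have key : φ y ^ p / dist x y ^ p * Real.exp (-a * dist x y)
          ≤ φ y ^ p * Real.exp (-a * dist x y) ^ (p / q) * (dist x y ^ p)⁻¹ := by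
        rw [div_eq_mul_inv]
        calc φ y ^ p * (dist x y ^ p)⁻¹ * Real.exp (-a * dist x y)
            ≤ φ y ^ p * (dist x y ^ p)⁻¹ * Real.exp (-a * dist x y) ^ (p / q) := by
              apply mul_le_mul_of_nonneg_left hee
              exact mul_nonneg (Real.rpow_nonneg (hφ0 y) _) (by positivity)
          _ = _ := by ring
      calc ENNReal.ofReal (φ y ^ p / dist x y ^ p * Real.exp (-a * dist x y))
          ≤ ENNReal.ofReal (φ y ^ p * Real.exp (-a * dist x y) ^ (p / q) * (dist x y ^ p)⁻¹) :=
            ENNReal.ofReal_le_ofReal key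
        _ = g y ^ (p / q) * h y ^ (p / s) := by
            rw [hgy, hhy, ← ENNReal.ofReal_mul (mul_nonneg (Real.rpow_nonneg (hφ0 y) _)
              (Real.rpow_nonneg (Real.exp_pos _).le _))]
  -- Hölder
  set G : ℝ≥0∞ := ∫⁻ y in Metric.ball x R, g y ∂μ with hGdef
  set H : ℝ≥0∞ := ∫⁻ y in Metric.ball x R, h y ∂μ with hHdef
  have hF : (∫⁻ y in Metric.ball x R,
      ENNReal.ofReal (φ y ^ p / dist x y ^ p * Real.exp (-a * dist x y)) ∂μ)
      ≤ G ^ (p / q) * H ^ (p / s) := by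
    calc (∫⁻ y in Metric.ball x R,
        ENNReal.ofReal (φ y ^ p / dist x y ^ p * Real.exp (-a * dist x y)) ∂μ)
        ≤ ∫⁻ y in Metric.ball x R, g y ^ (p / q) * h y ^ (p / s) ∂μ :=
          lintegral_mono hpt
      _ = ∫⁻ y, ((fun y => g y ^ (p / q)) * fun y => h y ^ (p / s)) y
            ∂(μ.restrict (Metric.ball x R)) := rfl
      _ ≤ (∫⁻ y, (g y ^ (p / q)) ^ (q / p) ∂(μ.restrict (Metric.ball x R))) ^ (1 / (q / p)) *
          (∫⁻ y, (h y ^ (p / s)) ^ (s / p) ∂(μ.restrict (Metric.ball x R))) ^ (1 / (s / p)) :=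
          ENNReal.lintegral_mul_le_Lp_mul_Lq _ hconj
            (hgm.pow measurable_const).aemeasurable
            (hhm.pow measurable_const).aemeasurable
      _ = G ^ (p / q) * H ^ (p / s) := by
          have e1 : ∀ y : X, (g y ^ (p / q)) ^ (q / p) = g y := by
            intro y
            rw [← ENNReal.rpow_mul, show (p / q) * (q / p) = 1 from by field_simp,
              ENNReal.rpow_one]
          have e2 : ∀ y : X, (h y ^ (p / s)) ^ (s / p) = h y := by
            intro y
            rw [← ENNReal.rpow_mul, show (p / s) * (s / p) = 1 from by field_simp,
              ENNReal.rpow_one]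
          simp_rw [e1, e2, one_div_div]
          rfl
  -- raise to power 1/(2p)
  have hmain : (∫⁻ y in Metric.ball x R,
      ENNReal.ofReal (φ y ^ p / dist x y ^ p * Real.exp (-a * dist x y)) ∂μ) ^ (1 / (2 * p))
      ≤ G ^ (1 / (2 * q)) * H ^ (1 / (2 * s)) := by
    calc (∫⁻ y in Metric.ball x R,
        ENNReal.ofReal (φ y ^ p / dist x y ^ p * Real.exp (-a * dist x y)) ∂μ) ^ (1 / (2 * p))
        ≤ (G ^ (p / q) * H ^ (p / s)) ^ (1 / (2 * p)) :=
          ENNReal.rpow_le_rpow hF (by positivity)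
      _ = G ^ (1 / (2 * q)) * H ^ (1 / (2 * s)) := by
          rw [ENNReal.mul_rpow_of_nonneg _ _ (by positivity), ← ENNReal.rpow_mul,
            ← ENNReal.rpow_mul, show (p / q) * (1 / (2 * p)) = 1 / (2 * q) from by
              field_simp,
            show (p / s) * (1 / (2 * p)) = 1 / (2 * s) from by field_simp]
  -- bound H
  have hH : H ≤ ENNReal.ofReal (C₀ * R ^ (l - s)) :=
    aux_dist_int μ x κ l R₀ hκ hl hR₀ hvol hx0 s hs0 hsl R hR hRR₀
  have hHpow : H ^ (1 / (2 * s))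
      ≤ ENNReal.ofReal (C₀ ^ (1 / (2 * s)) * R ^ (l / (2 * p) - l / (2 * q) - 1 / 2)) := by
    calc H ^ (1 / (2 * s)) ≤ (ENNReal.ofReal (C₀ * R ^ (l - s))) ^ (1 / (2 * s)) :=
          ENNReal.rpow_le_rpow hH (by positivity)
      _ = ENNReal.ofReal ((C₀ * R ^ (l - s)) ^ (1 / (2 * s))) :=
          ENNReal.ofReal_rpow_of_nonneg (by positivity) (by positivity)
      _ = ENNReal.ofReal (C₀ ^ (1 / (2 * s)) * R ^ (l / (2 * p) - l / (2 * q) - 1 / 2)) := by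
          rw [Real.mul_rpow hC₀0.le (by positivity), ← Real.rpow_mul hR.le,
            show (l - s) * (1 / (2 * s)) = l / (2 * p) - l / (2 * q) - 1 / 2 from by
              rw [hsdef]; field_simp]
  calc (∫⁻ y in Metric.ball x R,
      ENNReal.ofReal (φ y ^ p / dist x y ^ p * Real.exp (-a * dist x y)) ∂μ) ^ (1 / (2 * p))
      ≤ G ^ (1 / (2 * q)) * H ^ (1 / (2 * s)) := hmain
    _ ≤ G ^ (1 / (2 * q)) *
        ENNReal.ofReal (C₀ ^ (1 / (2 * s)) * R ^ (l / (2 * p) - l / (2 * q) - 1 / 2)) :=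
        mul_le_mul_right hHpow _
    _ = ENNReal.ofReal (C₀ ^ (1 / (2 * s)) * R ^ (l / (2 * p) - l / (2 * q) - 1 / 2)) *
        G ^ (1 / (2 * q)) := mul_comm _ _
end

section
/- Let n ≥ 2 be an integer and define α : (0, π/2] → ℝ by α(s) = (∫₀^s sin(r)^{n−1} dr) / sin(s)^{n−1}. Then α is differentiable on (0, π/2] with α'(s) ≥ 1/n for every s ∈ (0, π/2]; in particular α is strictly increasing on (0, π/2]. -/
open Real intervalIntegral

/-- For `α(s) = (∫₀^s sin(r)^(n−1) dr) / sin(s)^(n−1)` on `(0, π/2]`: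
α is differentiable with `α'(s) ≥ 1/n`, and α is strictly increasing there. -/
theorem stmt5 (n : ℕ) (hn : 2 ≤ n) :
    (∀ s ∈ Set.Ioc (0 : ℝ) (Real.pi / 2),
        DifferentiableAt ℝ
          (fun t => (∫ r in (0 : ℝ)..t, Real.sin r ^ (n - 1)) / Real.sin t ^ (n - 1)) s ∧
        (1 : ℝ) / n ≤
          deriv (fun t => (∫ r in (0 : ℝ)..t, Real.sin r ^ (n - 1)) / Real.sin t ^ (n - 1)) s) ∧
    StrictMonoOn
      (fun t => (∫ r in (0 : ℝ)..t, Real.sin r ^ (n - 1)) / Real.sin t ^ (n - 1))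
      (Set.Ioc (0 : ℝ) (Real.pi / 2)) := by
  set α := fun t => (∫ r in (0 : ℝ)..t, Real.sin r ^ (n - 1)) / Real.sin t ^ (n - 1) with hα
  have hcont : Continuous fun r : ℝ => Real.sin r ^ (n - 1) := by fun_prop
  have key : ∀ s ∈ Set.Ioc (0 : ℝ) (Real.pi / 2),
      HasDerivAt α
        ((Real.sin s ^ (n - 1) * Real.sin s ^ (n - 1)
          - (∫ r in (0 : ℝ)..s, Real.sin r ^ (n - 1))
              * ((n - 1 : ℕ) * Real.sin s ^ (n - 1 - 1) * Real.cos s))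
          / (Real.sin s ^ (n - 1)) ^ 2) s ∧
      (1 : ℝ) / n ≤ (Real.sin s ^ (n - 1) * Real.sin s ^ (n - 1)
          - (∫ r in (0 : ℝ)..s, Real.sin r ^ (n - 1))
              * ((n - 1 : ℕ) * Real.sin s ^ (n - 1 - 1) * Real.cos s))
          / (Real.sin s ^ (n - 1)) ^ 2 := by
    intro s hs
    obtain ⟨hs0, hs2⟩ := hs
    have hsin : 0 < Real.sin s :=
      Real.sin_pos_of_pos_of_lt_pi hs0 (lt_of_le_of_lt hs2 (by linarith [Real.pi_pos]))
    have hG : Real.sin s ^ (n - 1) ≠ 0 := pow_ne_zero _ hsin.ne'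
    have hF : HasDerivAt (fun t => ∫ r in (0 : ℝ)..t, Real.sin r ^ (n - 1))
        (Real.sin s ^ (n - 1)) s :=
      intervalIntegral.integral_hasDerivAt_right (hcont.intervalIntegrable _ _)
        (hcont.stronglyMeasurableAtFilter _ _) hcont.continuousAt
    have hGderiv : HasDerivAt (fun t => Real.sin t ^ (n - 1))
        ((n - 1 : ℕ) * Real.sin s ^ (n - 1 - 1) * Real.cos s) s := by
      have := (Real.hasDerivAt_sin s).fun_pow (n - 1)
      simpa [mul_comm, mul_assoc] using this
    refine ⟨hF.div hGderiv hG, ?_⟩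
    -- the key integral inequality: cos s * F(s) ≤ sin s ^ n / n
    have hcos0 : 0 ≤ Real.cos s := Real.cos_nonneg_of_mem_Icc ⟨by linarith, hs2⟩
    have hineq : Real.cos s * (∫ r in (0 : ℝ)..s, Real.sin r ^ (n - 1))
        ≤ Real.sin s ^ n / n := by
      have h1 : (∫ r in (0 : ℝ)..s, Real.sin r ^ (n - 1) * Real.cos s)
          ≤ ∫ r in (0 : ℝ)..s, Real.sin r ^ (n - 1) * Real.cos r := by
        apply intervalIntegral.integral_mono_on hs0.le
        · exact (hcont.mul continuous_const).intervalIntegrable _ _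
        · exact (hcont.mul Real.continuous_cos).intervalIntegrable _ _
        · intro x hx
          obtain ⟨hx0, hxs⟩ := hx
          have hsx : 0 ≤ Real.sin x := Real.sin_nonneg_of_nonneg_of_le_pi hx0
            (by linarith [Real.pi_pos])
          have hcc : Real.cos s ≤ Real.cos x :=
            Real.cos_le_cos_of_nonneg_of_le_pi hx0 (by linarith [Real.pi_pos]) hxs
          exact mul_le_mul_of_nonneg_left hcc (pow_nonneg hsx _)
      have h2 : (∫ r in (0 : ℝ)..s, Real.sin r ^ (n - 1) * Real.cos r)
          = Real.sin s ^ n / n := by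
        have := integral_sin_pow_mul_cos_pow_odd (a := 0) (b := s) (n - 1) 0
        simp only [mul_zero, zero_add, pow_one, pow_zero, mul_one, Real.sin_zero] at this
        rw [this, integral_pow]
        have h0 : (0:ℝ) ^ (n - 1 + 1) = 0 := zero_pow (by omega)
        have hc1 : ((n - 1 : ℕ) : ℝ) + 1 = (n : ℝ) := by
          rw [Nat.cast_sub (by omega)]; ring
        have hc2 : n - 1 + 1 = n := by omega
        rw [h0, sub_zero, hc1, hc2]
      calc Real.cos s * (∫ r in (0 : ℝ)..s, Real.sin r ^ (n - 1))
          = ∫ r in (0 : ℝ)..s, Real.sin r ^ (n - 1) * Real.cos s := by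
            rw [intervalIntegral.integral_mul_const, mul_comm]
        _ ≤ _ := h1
        _ = _ := h2
    -- algebra: rewrite the derivative and conclude
    have hn1 : (0 : ℝ) < (n : ℝ) - 1 := by
      have : (2 : ℝ) ≤ n := by exact_mod_cast hn
      linarith
    have hnn : (0 : ℝ) < n := by linarith
    have hpow : Real.sin s ^ (n - 1 - 1) * Real.sin s = Real.sin s ^ (n - 1) := by
      rw [← pow_succ]
      congr 1
      omega
    have hpow2 : Real.sin s ^ (n - 1) * Real.sin s = Real.sin s ^ n := by
      rw [← pow_succ]
      congr 1
      omega
    have hcast : ((n - 1 : ℕ) : ℝ) = (n : ℝ) - 1 := by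
      rw [Nat.cast_sub (by omega)]; simp
    have hpow3 : Real.sin s ^ (n - 1 - 1) * Real.sin s ^ n = (Real.sin s ^ (n - 1)) ^ 2 := by
      rw [← pow_add, ← pow_mul]
      congr 1
      omega
    have h4 : Real.sin s ^ (n - 1 - 1) *
        (Real.cos s * (∫ r in (0 : ℝ)..s, Real.sin r ^ (n - 1)))
        ≤ (Real.sin s ^ (n - 1)) ^ 2 / n := by
      calc Real.sin s ^ (n - 1 - 1) *
            (Real.cos s * (∫ r in (0 : ℝ)..s, Real.sin r ^ (n - 1)))
          ≤ Real.sin s ^ (n - 1 - 1) * (Real.sin s ^ n / n) :=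
            mul_le_mul_of_nonneg_left hineq (by positivity)
        _ = (Real.sin s ^ (n - 1)) ^ 2 / n := by rw [mul_div_assoc'] at *; rw [hpow3]
    have h6 : ((n : ℝ) - 1) * (Real.sin s ^ (n - 1 - 1) *
        (Real.cos s * (∫ r in (0 : ℝ)..s, Real.sin r ^ (n - 1)))) * n
        ≤ ((n : ℝ) - 1) * (Real.sin s ^ (n - 1)) ^ 2 := by
      have h5 := mul_le_mul_of_nonneg_left h4 hn1.le
      calc ((n : ℝ) - 1) * (Real.sin s ^ (n - 1 - 1) *
            (Real.cos s * (∫ r in (0 : ℝ)..s, Real.sin r ^ (n - 1)))) * n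
          ≤ ((n : ℝ) - 1) * ((Real.sin s ^ (n - 1)) ^ 2 / n) * n :=
            mul_le_mul_of_nonneg_right h5 hnn.le
        _ = ((n : ℝ) - 1) * (Real.sin s ^ (n - 1)) ^ 2 := by field_simp
    rw [div_le_div_iff₀ hnn (by positivity), hcast]
    nlinarith [h6]
  constructor
  · intro s hs
    obtain ⟨hd, hle⟩ := key s hs
    exact ⟨hd.differentiableAt, by rw [hd.deriv]; exact hle⟩
  · apply strictMonoOn_of_deriv_pos (convex_Ioc _ _)
    · intro s hs
      exact ((key s hs).1.differentiableAt.continuousAt).continuousWithinAt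
    · intro s hs
      rw [interior_Ioc] at hs
      obtain ⟨hd, hle⟩ := key s ⟨hs.1, hs.2.le⟩
      rw [hd.deriv]
      have hnn : (0 : ℝ) < n := by positivity
      calc (0:ℝ) < 1 / n := by positivity
        _ ≤ _ := hle
end

section
/- Let n ≥ 2 be an integer. The function α : (0,∞) → ℝ defined by α(s) = (∫₀^s sinh(r)^{n−1} dr) / sinh(s)^{n−1} is monotone non-decreasing on (0,∞). -/
open Real Set intervalIntegral

lemma F_hasDerivAt (m : ℕ) (s : ℝ) :
    HasDerivAt (fun s : ℝ => ∫ r in (0:ℝ)..s, Real.sinh r ^ m) (Real.sinh s ^ m) s := by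
  exact intervalIntegral.integral_hasDerivAt_right
    ((Real.continuous_sinh.pow m).intervalIntegrable _ _)
    ((Real.continuous_sinh.pow m).stronglyMeasurableAtFilter _ _)
    (Real.continuous_sinh.pow m).continuousAt

lemma key (m : ℕ) (hm : 1 ≤ m) {s : ℝ} (hs : 0 ≤ s) :
    (m : ℝ) * Real.cosh s * (∫ r in (0:ℝ)..s, Real.sinh r ^ m) ≤ Real.sinh s ^ (m + 1) := by
  set G : ℝ → ℝ := fun s =>
    Real.sinh s ^ (m + 1) / Real.cosh s - (m : ℝ) * ∫ r in (0:ℝ)..s, Real.sinh r ^ m with hG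
  have hderiv : ∀ x : ℝ, HasDerivAt G
      ((((m : ℝ) + 1) * Real.sinh x ^ m * Real.cosh x * Real.cosh x
        - Real.sinh x ^ (m + 1) * Real.sinh x) / Real.cosh x ^ 2
        - (m : ℝ) * Real.sinh x ^ m) x := by
    intro x
    have h1 : HasDerivAt (fun x : ℝ => Real.sinh x ^ (m + 1))
        (((m : ℝ) + 1) * Real.sinh x ^ m * Real.cosh x) x := by
      have := (Real.hasDerivAt_sinh x).fun_pow (m + 1)
      simpa using this
    have h2 := Real.hasDerivAt_cosh x
    have hc : Real.cosh x ≠ 0 := (Real.cosh_pos x).ne'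
    exact (h1.div h2 hc).sub ((F_hasDerivAt m x).const_mul _)
  have hmono : MonotoneOn G (Set.Ici (0:ℝ)) := by
    apply monotoneOn_of_deriv_nonneg (convex_Ici 0)
    · exact fun x _ => (hderiv x).continuousAt.continuousWithinAt
    · exact fun x _ => (hderiv x).differentiableAt.differentiableWithinAt
    · intro x hx
      rw [interior_Ici] at hx
      rw [(hderiv x).deriv]
      have ht : 0 ≤ Real.sinh x := Real.sinh_nonneg_iff.mpr hx.le
      have hc : (0:ℝ) < Real.cosh x ^ 2 := pow_pos (Real.cosh_pos x) 2
      rw [sub_nonneg, le_div_iff₀ hc]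
      have hsq : Real.cosh x ^ 2 = Real.sinh x ^ 2 + 1 := Real.cosh_sq x
      have htm : 0 ≤ Real.sinh x ^ m := pow_nonneg ht m
      have hkey : ((m:ℝ) + 1) * Real.sinh x ^ m * Real.cosh x * Real.cosh x
          - Real.sinh x ^ (m + 1) * Real.sinh x
          = (m:ℝ) * Real.sinh x ^ m * Real.cosh x ^ 2 + Real.sinh x ^ m := by
        linear_combination (Real.sinh x ^ m) * (Real.cosh_sq x)
      rw [hkey]
      linarith
  have h0 : G 0 = 0 := by simp [hG]
  have := hmono (self_mem_Ici) hs hs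
  rw [h0, hG] at this
  simp only [sub_nonneg] at this
  have hc : (0:ℝ) < Real.cosh s := Real.cosh_pos s
  calc (m : ℝ) * Real.cosh s * (∫ r in (0:ℝ)..s, Real.sinh r ^ m)
      = ((m : ℝ) * ∫ r in (0:ℝ)..s, Real.sinh r ^ m) * Real.cosh s := by ring
    _ ≤ (Real.sinh s ^ (m + 1) / Real.cosh s) * Real.cosh s := by
        exact mul_le_mul_of_nonneg_right this hc.le
    _ = Real.sinh s ^ (m + 1) := by field_simp

/-- The hyperbolic model-space ratio `s ↦ (∫₀^s sinh(r)^(n−1) dr) / sinh(s)^(n−1)`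
is monotone non-decreasing on `(0, ∞)`. -/
theorem stmt7 (n : ℕ) (hn : 2 ≤ n) :
    MonotoneOn
      (fun s => (∫ r in (0 : ℝ)..s, Real.sinh r ^ (n - 1)) / Real.sinh s ^ (n - 1))
      (Set.Ioi (0 : ℝ)) := by
  set m := n - 1 with hm
  have hm1 : 1 ≤ m := Nat.le_sub_of_add_le hn
  have hderiv : ∀ x ∈ Set.Ioi (0:ℝ), HasDerivAt
      (fun s => (∫ r in (0 : ℝ)..s, Real.sinh r ^ m) / Real.sinh s ^ m)
      ((Real.sinh x ^ m * Real.sinh x ^ m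
        - (∫ r in (0 : ℝ)..x, Real.sinh r ^ m)
          * ((m : ℝ) * Real.sinh x ^ (m - 1) * Real.cosh x)) / (Real.sinh x ^ m) ^ 2) x := by
    intro x hx
    have hx0 : (0:ℝ) < x := hx
    have ht : 0 < Real.sinh x := by
      rwa [show (0:ℝ) = Real.sinh 0 by simp, Real.sinh_lt_sinh]
    have h2 : HasDerivAt (fun s : ℝ => Real.sinh s ^ m)
        ((m : ℝ) * Real.sinh x ^ (m - 1) * Real.cosh x) x :=
      (Real.hasDerivAt_sinh x).pow m
    exact (F_hasDerivAt m x).div h2 (pow_ne_zero m ht.ne')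
  apply monotoneOn_of_deriv_nonneg (convex_Ioi 0)
  · exact fun x hx => ((hderiv x hx).continuousAt).continuousWithinAt
  · intro x hx
    rw [interior_Ioi] at hx
    exact (hderiv x hx).differentiableAt.differentiableWithinAt
  · intro x hx
    rw [interior_Ioi] at hx
    rw [(hderiv x hx).deriv]
    apply div_nonneg _ (sq_nonneg _)
    have hx0 : (0:ℝ) < x := hx
    have ht : 0 < Real.sinh x := by
      rwa [show (0:ℝ) = Real.sinh 0 by simp, Real.sinh_lt_sinh]
    have hF0 : 0 ≤ ∫ r in (0:ℝ)..x, Real.sinh r ^ m := by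
      apply intervalIntegral.integral_nonneg hx0.le
      intro r hr
      exact pow_nonneg (Real.sinh_nonneg_iff.mpr hr.1) m
    have hk := key m hm1 hx0.le
    have htm1 : 0 ≤ Real.sinh x ^ (m - 1) := pow_nonneg ht.le _
    rw [sub_nonneg]
    calc (∫ r in (0 : ℝ)..x, Real.sinh r ^ m) * ((m : ℝ) * Real.sinh x ^ (m - 1) * Real.cosh x)
        = ((m : ℝ) * Real.cosh x * ∫ r in (0 : ℝ)..x, Real.sinh r ^ m)
            * Real.sinh x ^ (m - 1) := by ring
      _ ≤ Real.sinh x ^ (m + 1) * Real.sinh x ^ (m - 1) :=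
          mul_le_mul_of_nonneg_right hk htm1
      _ = Real.sinh x ^ m * Real.sinh x ^ m := by
          rw [← pow_add, ← pow_add]
          congr 1
          omega
end

section
/- Let n ≥ 2 be an integer, λ ≤ 0, a ≥ 0, and let (Θ, ν) be a finite measure space with total mass m = ν(Θ) > 0. Let w : (0,∞) × Θ → [0,∞) be jointly measurable, with w(·,θ) continuously differentiable for each θ, and let ψ : (0,∞) × Θ → [0,∞) be measurable with ∂_r w(s,θ) ≤ (ψ(s,θ) + h_λ(s) + a)·w(s,θ) for all s > 0 and θ ∈ Θ. Define V(R) = ∫_Θ ∫₀^R w(r,θ) dr dν(θ), assume V(R) < ∞ for all R and that V is differentiable with V'(R) = ∫_Θ w(R,θ) dν(θ), and define v_a(R) = m·∫₀^R e^{ar}·sn_λ(r)^{n−1} dr. Then for every R > 0, (d/dR)(V(R)/v_a(R)) ≤ (e^{aR}·sn_λ(R)^{n−1}·m / v_a(R)²) · (sup_{0<s≤R} (∫₀^s sn_λ(u)^{n−1} du)/sn_λ(s)^{n−1}) · ∫_Θ ∫₀^R ψ(s,θ)·w(s,θ) ds dν(θ). -/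
open MeasureTheory

noncomputable def snD (l : ℝ) (r : ℝ) : ℝ :=
  if l = 0 then 1 else Real.cosh (Real.sqrt (-l) * r)

lemma sn_of_neg {l : ℝ} (hl : l < 0) (r : ℝ) :
    sn l r = Real.sinh (Real.sqrt (-l) * r) / Real.sqrt (-l) := by
  simp [sn, hl.ne, not_lt.2 hl.le]

lemma hasDerivAt_sn {l : ℝ} (hl : l ≤ 0) (r : ℝ) : HasDerivAt (sn l) (snD l r) r := by
  rcases eq_or_lt_of_le hl with h | h
  · subst h
    have e1 : sn 0 = fun r : ℝ => r := by funext x; simp [sn]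
    have e2 : snD 0 r = 1 := by simp [snD]
    rw [e1, e2]; exact hasDerivAt_id r
  · have hc : 0 < Real.sqrt (-l) := Real.sqrt_pos.2 (by linarith)
    have : HasDerivAt (fun r : ℝ => Real.sinh (Real.sqrt (-l) * r) / Real.sqrt (-l))
        (Real.cosh (Real.sqrt (-l) * r)) r := by
      have h1 : HasDerivAt (fun r : ℝ => Real.sqrt (-l) * r) (Real.sqrt (-l)) r := by
        simpa using (hasDerivAt_id r).const_mul (Real.sqrt (-l))
      have h2 := (Real.hasDerivAt_sinh (Real.sqrt (-l) * r)).comp r h1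
      have h3 := h2.div_const (Real.sqrt (-l))
      simpa [mul_comm, mul_div_assoc, mul_div_cancel_left₀ _ hc.ne'] using h3
    have heq : sn l = fun r : ℝ => Real.sinh (Real.sqrt (-l) * r) / Real.sqrt (-l) :=
      funext (sn_of_neg h)
    simp only [snD, heq, if_neg (by linarith : l ≠ 0)]
    exact this

lemma deriv_sn {l : ℝ} (hl : l ≤ 0) (r : ℝ) : deriv (sn l) r = snD l r :=
  (hasDerivAt_sn hl r).deriv

lemma sn_zero' {l : ℝ} (hl : l ≤ 0) : sn l 0 = 0 := by
  rcases eq_or_lt_of_le hl with h | h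
  · simp [sn, h.symm]
  · simp [sn_of_neg h]

lemma sn_pos {l : ℝ} (hl : l ≤ 0) {r : ℝ} (hr : 0 < r) : 0 < sn l r := by
  rcases eq_or_lt_of_le hl with h | h
  · simpa [sn, h.symm] using hr
  · have hc : 0 < Real.sqrt (-l) := Real.sqrt_pos.2 (by linarith)
    rw [sn_of_neg h]
    exact div_pos (by positivity) hc

lemma snD_pos {l : ℝ} (r : ℝ) : 0 < snD l r := by
  unfold snD; split
  · norm_num
  · exact Real.cosh_pos _

lemma sn_mono {l : ℝ} (hl : l ≤ 0) : StrictMono (sn l) := by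
  have : ∀ r : ℝ, HasDerivAt (sn l) (snD l r) r := hasDerivAt_sn hl
  exact strictMono_of_hasDerivAt_pos this (fun r => snD_pos r)

lemma sn_continuous {l : ℝ} (hl : l ≤ 0) : Continuous (sn l) := by
  have : ∀ r : ℝ, HasDerivAt (sn l) (snD l r) r := hasDerivAt_sn hl
  exact continuous_iff_continuousAt.2 fun x => (this x).differentiableAt.continuousAt

noncomputable def yf (n : ℕ) (l a : ℝ) (r : ℝ) : ℝ := Real.exp (a * r) * sn l r ^ (n - 1)

lemma yf_continuous {l : ℝ} (hl : l ≤ 0) (n : ℕ) (a : ℝ) : Continuous (yf n l a) := by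
  unfold yf
  exact ((Real.continuous_exp.comp (continuous_const.mul continuous_id))).mul
    ((sn_continuous hl).pow _)

lemma yf_pos {l : ℝ} (hl : l ≤ 0) (n : ℕ) (a : ℝ) {r : ℝ} (hr : 0 < r) : 0 < yf n l a r := by
  unfold yf; exact mul_pos (Real.exp_pos _) (pow_pos (sn_pos hl hr) _)

lemma yf_nonneg {l : ℝ} (hl : l ≤ 0) (n : ℕ) (a : ℝ) {r : ℝ} (hr : 0 ≤ r) : 0 ≤ yf n l a r := by
  unfold yf
  have : 0 ≤ sn l r := by
    rcases hr.eq_or_lt with h | h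
    · simp [← h, sn_zero' hl]
    · exact (sn_pos hl h).le
  positivity

lemma hasDerivAt_yf {l : ℝ} (hl : l ≤ 0) {n : ℕ} (hn : 2 ≤ n) (a : ℝ) {r : ℝ} (hr : 0 < r) :
    HasDerivAt (yf n l a) ((a + hModel n l r) * yf n l a r) r := by
  have hs : sn l r ≠ 0 := (sn_pos hl hr).ne'
  have he : HasDerivAt (fun x => Real.exp (a * x)) (a * Real.exp (a * r)) r := by
    have h1 : HasDerivAt (fun x : ℝ => a * x) a r := by
      simpa using (hasDerivAt_id r).const_mul a
    exact ((Real.hasDerivAt_exp (a * r)).comp r h1).congr_deriv (by ring)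
  have hp : HasDerivAt (fun x => sn l x ^ (n - 1))
      (((n - 1 : ℕ) : ℝ) * sn l r ^ (n - 1 - 1) * snD l r) r :=
    (hasDerivAt_sn hl r).pow (n - 1)
  have h := he.mul hp
  have hcast : ((n - 1 : ℕ) : ℝ) = (n : ℝ) - 1 := by
    have : (1 : ℕ) ≤ n := by omega
    push_cast [Nat.cast_sub this]; ring
  have hpow : sn l r ^ (n - 1) = sn l r ^ (n - 1 - 1) * sn l r := by
    rw [← pow_succ]; congr 1; omega
  have : (a + hModel n l r) * yf n l a r =
      a * Real.exp (a * r) * sn l r ^ (n - 1) +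
        Real.exp (a * r) * (((n - 1 : ℕ) : ℝ) * sn l r ^ (n - 1 - 1) * snD l r) := by
    unfold yf hModel snQuot
    rw [deriv_sn hl, hcast, hpow]
    field_simp
  rw [this]
  exact h

lemma hModel_eq {l : ℝ} (hl : l ≤ 0) (n : ℕ) (r : ℝ) :
    hModel n l r = ((n : ℝ) - 1) * (snD l r / sn l r) := by
  unfold hModel snQuot
  rw [deriv_sn hl]

lemma snD_continuous (l : ℝ) : Continuous (snD l) := by
  unfold snD
  split_ifs
  · exact continuous_const
  · exact Real.continuous_cosh.comp (continuous_const.mul continuous_id)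

lemma step_ratio {l a : ℝ} {n : ℕ} (hl : l ≤ 0) (hn : 2 ≤ n) (ha : 0 ≤ a)
    {f p : ℝ → ℝ}
    (hf_C1 : ContDiffOn ℝ 1 f (Set.Ioi 0))
    (hmean : ∀ s : ℝ, 0 < s → deriv f s ≤ (p s + hModel n l s + a) * f s)
    {R s : ℝ} (hs : 0 < s) (hsR : s ≤ R)
    (hq : IntervalIntegrable (fun u => p u * f u / yf n l a u) MeasureTheory.volume s R) :
    f R * yf n l a s ≤ yf n l a R * f s +
      yf n l a R * yf n l a s * ∫ u in s..R, p u * f u / yf n l a u := by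
  set y := yf n l a with hy
  have hsub : Set.Icc s R ⊆ Set.Ioi (0:ℝ) := fun t ht => lt_of_lt_of_le hs ht.1
  -- derivative of the quotient
  set gd : ℝ → ℝ := fun t =>
    (deriv f t * y t - f t * ((a + hModel n l t) * y t)) / (y t) ^ 2 with hgd
  have hyne : ∀ t ∈ Set.Icc s R, y t ≠ 0 := fun t ht => (yf_pos hl n a (hsub ht)).ne'
  have hder : ∀ t ∈ Set.Icc s R, HasDerivAt (fun u => f u / y u) (gd t) t := by
    intro t ht
    have ht0 : (0:ℝ) < t := hsub ht
    have hfd : HasDerivAt f (deriv f t) t := by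
      have : DifferentiableAt ℝ f t :=
        ((hf_C1.differentiableOn one_ne_zero).differentiableAt
          (isOpen_Ioi.mem_nhds ht0))
      exact this.hasDerivAt
    exact hfd.div (hasDerivAt_yf hl hn a ht0) (hyne t ht)
  -- continuity of gd on Icc s R
  have hsn_ne : ∀ t ∈ Set.Icc s R, sn l t ≠ 0 := fun t ht => (sn_pos hl (hsub ht)).ne'
  have hgd_cont : ContinuousOn gd (Set.Icc s R) := by
    have hdf : ContinuousOn (deriv f) (Set.Icc s R) :=
      (hf_C1.continuousOn_deriv_of_isOpen isOpen_Ioi le_rfl).mono hsub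
    have hf_cont : ContinuousOn f (Set.Icc s R) := (hf_C1.continuousOn).mono hsub
    have hy_cont : ContinuousOn y (Set.Icc s R) := (yf_continuous hl n a).continuousOn
    have hh_cont : ContinuousOn (fun t => hModel n l t) (Set.Icc s R) := by
      have : ContinuousOn (fun t => ((n : ℝ) - 1) * (snD l t / sn l t)) (Set.Icc s R) :=
        (continuousOn_const.mul (((snD_continuous l).continuousOn).div
          ((sn_continuous hl).continuousOn) hsn_ne))
      exact this.congr (fun t _ => hModel_eq hl n t)
    apply ContinuousOn.div
    · exact (hdf.mul hy_cont).sub (hf_cont.mul ((continuousOn_const.add hh_cont).mul hy_cont))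
    · exact hy_cont.pow 2
    · exact fun t ht => pow_ne_zero 2 (hyne t ht)
  have hIcc : Set.uIcc s R = Set.Icc s R := Set.uIcc_of_le hsR
  have hgd_ii : IntervalIntegrable gd MeasureTheory.volume s R := by
    apply ContinuousOn.intervalIntegrable
    rwa [hIcc]
  -- FTC
  have hFTC : (∫ u in s..R, gd u) = f R / y R - f s / y s := by
    apply intervalIntegral.integral_eq_sub_of_hasDerivAt
    · intro t ht; rw [hIcc] at ht; exact hder t ht
    · exact hgd_ii
  -- pointwise bound on gd
  have hptwise : ∀ t ∈ Set.Icc s R, gd t ≤ p t * f t / y t := by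
    intro t ht
    have ht0 : (0:ℝ) < t := hsub ht
    have hyp : (0:ℝ) < y t := yf_pos hl n a ht0
    have hnum : deriv f t * y t - f t * ((a + hModel n l t) * y t) ≤ p t * f t * y t := by
      have h1 : deriv f t ≤ (p t + hModel n l t + a) * f t := hmean t ht0
      nlinarith [mul_le_mul_of_nonneg_right h1 hyp.le]
    have h2 : gd t ≤ p t * f t * y t / (y t) ^ 2 := by
      rw [hgd]
      exact div_le_div_of_nonneg_right hnum (by positivity) -- try
    have h3 : p t * f t * y t / (y t) ^ 2 = p t * f t / y t := by
      field_simp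
    rw [h3] at h2
    exact h2
  have hmono : (∫ u in s..R, gd u) ≤ ∫ u in s..R, p u * f u / y u :=
    intervalIntegral.integral_mono_on hsR hgd_ii hq hptwise
  have hdiv : f R / y R ≤ f s / y s + ∫ u in s..R, p u * f u / y u := by
    rw [hFTC] at hmono; linarith
  have hyR : (0:ℝ) < y R := yf_pos hl n a (lt_of_lt_of_le hs hsR)
  have hys : (0:ℝ) < y s := yf_pos hl n a hs
  have := mul_le_mul_of_nonneg_right hdiv (mul_pos hyR hys).le
  calc f R * y s = f R / y R * (y R * y s) := by field_simp
    _ ≤ (f s / y s + ∫ u in s..R, p u * f u / y u) * (y R * y s) := this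
    _ = y R * f s + y R * y s * ∫ u in s..R, p u * f u / y u := by field_simp

lemma sn_nonneg {l : ℝ} (hl : l ≤ 0) {r : ℝ} (hr : 0 ≤ r) : 0 ≤ sn l r := by
  rcases hr.eq_or_lt with h | h
  · simp [← h, sn_zero' hl]
  · exact (sn_pos hl h).le

lemma yf_mono {l a : ℝ} (hl : l ≤ 0) (ha : 0 ≤ a) (n : ℕ) {s u : ℝ}
    (hs : 0 ≤ s) (hsu : s ≤ u) : yf n l a s ≤ yf n l a u := by
  unfold yf
  have h1 : Real.exp (a * s) ≤ Real.exp (a * u) :=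
    Real.exp_le_exp.2 (mul_le_mul_of_nonneg_left hsu ha)
  have h2 : sn l s ^ (n - 1) ≤ sn l u ^ (n - 1) :=
    pow_le_pow_left₀ (sn_nonneg hl hs) ((sn_mono hl).monotone hsu) _
  exact mul_le_mul h1 h2 (pow_nonneg (sn_nonneg hl hs) _) (Real.exp_pos _).le

open MeasureTheory in
lemma key_theta {l a : ℝ} {n : ℕ} (hl : l ≤ 0) (hn : 2 ≤ n) (ha : 0 ≤ a)
    {f p : ℝ → ℝ} {R C : ℝ} (hR : 0 < R) (hC0 : 0 ≤ C)
    (hf_C1 : ContDiffOn ℝ 1 f (Set.Ioi 0))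
    (hf_nonneg : ∀ r : ℝ, 0 < r → 0 ≤ f r)
    (hf_meas : Measurable f) (hp_meas : Measurable p)
    (hp_nonneg : ∀ r : ℝ, 0 < r → 0 ≤ p r)
    (hmean : ∀ s : ℝ, 0 < s → deriv f s ≤ (p s + hModel n l s + a) * f s)
    (hfint : IntegrableOn f (Set.Ioc 0 R))
    (hpfint : IntegrableOn (fun u => p u * f u) (Set.Ioc 0 R))
    (hC : ∀ u ∈ Set.Ioc (0:ℝ) R, (∫ x in Set.Ioc (0:ℝ) u, yf n l a x) ≤ C * yf n l a u) :
    f R * (∫ x in Set.Ioc (0:ℝ) R, yf n l a x) ≤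
      yf n l a R * (∫ x in Set.Ioc (0:ℝ) R, f x) +
        yf n l a R * C * ∫ u in Set.Ioc (0:ℝ) R, p u * f u := by
  set y := yf n l a with hy
  set I := Set.Ioc (0:ℝ) R with hI
  have hy_cont : Continuous y := yf_continuous hl n a
  have hy_meas : Measurable y := hy_cont.measurable
  set q : ℝ → ℝ := fun u => p u * f u / y u with hqdef
  have hq_meas : Measurable q := (hp_meas.mul hf_meas).div hy_meas
  set F : ℝ × ℝ → ℝ := fun z => if z.1 < z.2 then y z.1 * q z.2 else 0 with hFdef
  have hF_meas : Measurable F := by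
    exact Measurable.ite (measurableSet_lt measurable_fst measurable_snd)
      ((hy_meas.comp measurable_fst).mul (hq_meas.comp measurable_snd)) measurable_const
  have hprod : (volume.restrict I).prod (volume.restrict I)
      = (volume.prod volume).restrict (I ×ˢ I) := Measure.prod_restrict I I
  have hG_int : Integrable (fun z : ℝ × ℝ => p z.2 * f z.2)
      ((volume.restrict I).prod (volume.restrict I)) := by
    have := (integrable_const (1:ℝ) (μ := volume.restrict I)).mul_prod hpfint
    simpa using this
  have hF_bound : ∀ z : ℝ × ℝ, z ∈ I ×ˢ I → ‖F z‖ ≤ p z.2 * f z.2 := by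
    rintro ⟨z1, z2⟩ hz
    obtain ⟨hz1, hz2⟩ := hz
    by_cases hlt : z1 < z2
    · have hz2pos : (0:ℝ) < z2 := hz2.1
      have hq_nonneg : 0 ≤ q z2 := by
        have := yf_pos hl n a hz2pos
        exact div_nonneg (mul_nonneg (hp_nonneg _ hz2pos) (hf_nonneg _ hz2pos)) this.le
      have hF_val : F (z1, z2) = y z1 * q z2 := if_pos hlt
      have h1 : y z1 * q z2 ≤ y z2 * q z2 :=
        mul_le_mul_of_nonneg_right (yf_mono hl ha n hz1.1.le hlt.le) hq_nonneg
      have h2 : y z2 * q z2 = p z2 * f z2 := by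
        rw [hqdef]
        field_simp [(yf_pos hl n a hz2pos).ne']
        rw [mul_assoc]; exact mul_div_cancel_left₀ _ (yf_pos hl n a hz2pos).ne'
      rw [hF_val, Real.norm_eq_abs, abs_of_nonneg
        (mul_nonneg (yf_nonneg hl n a hz1.1.le) hq_nonneg)]
      rw [h2] at h1; exact h1
    · have : F (z1, z2) = 0 := if_neg hlt
      rw [this, norm_zero]
      exact mul_nonneg (hp_nonneg _ hz2.1) (hf_nonneg _ hz2.1)
  have hF_int : Integrable F ((volume.restrict I).prod (volume.restrict I)) := by
    apply Integrable.mono' hG_int hF_meas.aestronglyMeasurable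
    rw [hprod]
    filter_upwards [ae_restrict_mem ((measurableSet_Ioc.prod measurableSet_Ioc))] with z hz
    exact hF_bound z hz
  -- inner integral identities
  have hinner_left : ∀ s ∈ I, (∫ u in I, F (s, u)) = y s * ∫ u in Set.Ioc s R, q u := by
    intro s hs
    have h1 : (fun u => F (s, u)) = (Set.Ioi s).indicator (fun u => y s * q u) := by
      funext u
      simp only [hFdef, Set.indicator, Set.mem_Ioi]
    rw [h1, setIntegral_indicator measurableSet_Ioi]
    have h2 : I ∩ Set.Ioi s = Set.Ioc s R := by
      ext x; simp only [hI, Set.mem_inter_iff, Set.mem_Ioc, Set.mem_Ioi]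
      constructor
      · rintro ⟨⟨_, hx2⟩, hx3⟩; exact ⟨hx3, hx2⟩
      · rintro ⟨hx1, hx2⟩; exact ⟨⟨lt_trans hs.1 hx1, hx2⟩, hx1⟩
    rw [h2, integral_const_mul]
  have hinner_right : ∀ u ∈ I, (∫ s in I, F (s, u)) = q u * ∫ x in Set.Ioc (0:ℝ) u, y x := by
    intro u hu
    have h1 : (fun s => F (s, u)) = (Set.Iio u).indicator (fun s => y s * q u) := by
      funext s
      simp only [hFdef, Set.indicator, Set.mem_Iio]
    rw [h1, setIntegral_indicator measurableSet_Iio]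
    have h2 : I ∩ Set.Iio u = Set.Ioo 0 u := by
      ext x; simp only [hI, Set.mem_inter_iff, Set.mem_Ioc, Set.mem_Iio, Set.mem_Ioo]
      constructor
      · rintro ⟨⟨hx1, _⟩, hx3⟩; exact ⟨hx1, hx3⟩
      · rintro ⟨hx1, hx2⟩; exact ⟨⟨hx1, le_trans hx2.le hu.2⟩, hx2⟩
    rw [h2]
    rw [← integral_Ioc_eq_integral_Ioo]
    rw [integral_mul_const]
    ring
  -- continue
  set Y : ℝ → ℝ := fun u => ∫ x in Set.Ioc (0:ℝ) u, y x with hYdef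
  set J : ℝ → ℝ := fun s => ∫ u in Set.Ioc s R, q u with hJdef
  have hswap : (∫ s in I, ∫ u in I, F (s, u)) = ∫ u in I, ∫ s in I, F (s, u) := by
    exact integral_integral_swap (f := fun s u => F (s, u)) hF_int
  have hLeq : (∫ s in I, ∫ u in I, F (s, u)) = ∫ s in I, y s * J s :=
    setIntegral_congr_fun measurableSet_Ioc (fun s hs => hinner_left s hs)
  have hReq : (∫ u in I, ∫ s in I, F (s, u)) = ∫ u in I, q u * Y u :=
    setIntegral_congr_fun measurableSet_Ioc (fun u hu => hinner_right u hu)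
  -- integrability of the integral functions
  have hyJ_int : IntegrableOn (fun s => y s * J s) I := by
    have h1 : Integrable (fun s => ∫ u in I, F (s, u)) (volume.restrict I) :=
      hF_int.integral_prod_left
    exact h1.congr (by
      filter_upwards [ae_restrict_mem measurableSet_Ioc] with s hs
      exact hinner_left s hs)
  have hqY_int : IntegrableOn (fun u => q u * Y u) I := by
    have h1 : Integrable (fun u => ∫ s in I, F (s, u)) (volume.restrict I) :=
      hF_int.integral_prod_right
    exact h1.congr (by
      filter_upwards [ae_restrict_mem measurableSet_Ioc] with u hu
      exact hinner_right u hu)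
  -- bound ∫ q Y ≤ C ∫ p f
  have hqY_le : (∫ u in I, q u * Y u) ≤ C * ∫ u in I, p u * f u := by
    have h1 : (∫ u in I, q u * Y u) ≤ ∫ u in I, C * (p u * f u) := by
      apply setIntegral_mono_on hqY_int (hpfint.const_mul C) measurableSet_Ioc
      intro u hu
      have hu0 : (0:ℝ) < u := hu.1
      have hyu : (0:ℝ) < y u := yf_pos hl n a hu0
      have hq_nonneg : 0 ≤ q u :=
        div_nonneg (mul_nonneg (hp_nonneg _ hu0) (hf_nonneg _ hu0)) hyu.le
      calc q u * Y u ≤ q u * (C * y u) :=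
            mul_le_mul_of_nonneg_left (hC u hu) hq_nonneg
        _ = C * (p u * f u) := by
            rw [hqdef]; field_simp
    rwa [integral_const_mul] at h1
  -- step A for each s ∈ I
  have hstepA : ∀ s ∈ I, f R * y s ≤ y R * f s + y R * (y s * J s) := by
    intro s hs
    have hs0 : (0:ℝ) < s := hs.1
    have hsR : s ≤ R := hs.2
    have hq_ii : IntervalIntegrable q volume s R := by
      have hpf_ii : IntervalIntegrable (fun u => p u * f u) volume s R :=
        (intervalIntegrable_iff_integrableOn_Ioc_of_le hsR).2
          (hpfint.mono_set (Set.Ioc_subset_Ioc_left hs0.le))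
      have hinv : ContinuousOn (fun u => (y u)⁻¹) (Set.uIcc s R) := by
        rw [Set.uIcc_of_le hsR]
        exact (hy_cont.continuousOn).inv₀
          (fun t ht => (yf_pos hl n a (lt_of_lt_of_le hs0 ht.1)).ne')
      have h2 := hpf_ii.mul_continuousOn hinv
      have heq : q = fun u => p u * f u * (y u)⁻¹ := by
        funext u; exact div_eq_mul_inv _ _
      rw [heq]; exact h2
    have h := step_ratio hl hn ha hf_C1 hmean hs0 hsR hq_ii
    rw [intervalIntegral.integral_of_le hsR, mul_assoc] at h
    exact h
  -- integrate step A over s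
  have hfyint : IntegrableOn (fun s => f R * y s) I :=
    (hy_cont.integrableOn_Ioc).const_mul _
  have hRHS_int : IntegrableOn (fun s => y R * f s + y R * (y s * J s)) I :=
    (hfint.const_mul _).add (hyJ_int.const_mul _)
  have hint_le : (∫ s in I, f R * y s) ≤ ∫ s in I, (y R * f s + y R * (y s * J s)) :=
    setIntegral_mono_on hfyint hRHS_int measurableSet_Ioc hstepA
  rw [integral_const_mul] at hint_le
  rw [integral_add (hfint.const_mul _) (hyJ_int.const_mul _), integral_const_mul,
    integral_const_mul] at hint_le
  have hyR_nonneg : 0 ≤ y R := (yf_pos hl n a hR).le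
  have hchain : (∫ s in I, y s * J s) ≤ C * ∫ u in I, p u * f u := by
    rw [← hLeq, hswap, hReq]; exact hqY_le
  calc f R * (∫ x in I, y x) ≤ y R * (∫ x in I, f x) + y R * ∫ s in I, y s * J s := hint_le
    _ ≤ y R * (∫ x in I, f x) + y R * (C * ∫ u in I, p u * f u) := by
        have := mul_le_mul_of_nonneg_left hchain hyR_nonneg
        linarith
    _ = y R * (∫ x in I, f x) + y R * C * ∫ u in I, p u * f u := by ring

set_option maxHeartbeats 2000000

/-- Analytic form of Lemma 4.1 (volume-ratio derivative estimate):
`(d/dR)(V(R)/v_a(R)) ≤ (e^{aR} sn_λ(R)^{n−1} m / v_a(R)²) ·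
  (sup_{0<s≤R} (∫₀^s sn_λ^{n−1})/sn_λ(s)^{n−1}) · ∫_Θ ∫₀^R ψ w`. -/
theorem stmt11 {Θ : Type*} [MeasurableSpace Θ] (ν : Measure Θ)
    [IsFiniteMeasure ν] (hm : 0 < ν Set.univ)
    (n : ℕ) (hn : 2 ≤ n) (l a : ℝ) (hl : l ≤ 0) (ha : 0 ≤ a)
    (w ψ : ℝ → Θ → ℝ)
    (hw_meas : Measurable (Function.uncurry w))
    (hw_nonneg : ∀ r : ℝ, 0 < r → ∀ θ, 0 ≤ w r θ)
    (hw_C1 : ∀ θ, ContDiffOn ℝ 1 (fun r => w r θ) (Set.Ioi 0))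
    (hψ_meas : Measurable (Function.uncurry ψ))
    (hψ_nonneg : ∀ r : ℝ, 0 < r → ∀ θ, 0 ≤ ψ r θ)
    (hmean : ∀ s : ℝ, 0 < s → ∀ θ,
      deriv (fun r => w r θ) s ≤ (ψ s θ + hModel n l s + a) * w s θ)
    (V va : ℝ → ℝ)
    (hV : ∀ R : ℝ, V R = ∫ θ, (∫ r in Set.Ioc (0 : ℝ) R, w r θ) ∂ν)
    (hwint : ∀ θ, ∀ R : ℝ, 0 < R → IntegrableOn (fun r => w r θ) (Set.Ioc 0 R))
    (hVfin : ∀ R : ℝ, 0 < R →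
      Integrable (fun θ => ∫ r in Set.Ioc (0 : ℝ) R, w r θ) ν)
    (hV' : ∀ R : ℝ, 0 < R → HasDerivAt V (∫ θ, w R θ ∂ν) R)
    (hva : va = fun R =>
      (ν Set.univ).toReal *
        ∫ r in Set.Ioc (0 : ℝ) R, Real.exp (a * r) * sn l r ^ (n - 1)) :
    ∀ R : ℝ, 0 < R →
      ENNReal.ofReal (deriv (fun t => V t / va t) R) ≤
        ENNReal.ofReal
          (Real.exp (a * R) * sn l R ^ (n - 1) * (ν Set.univ).toReal / (va R) ^ 2 *
            (⨆ s : Set.Ioc (0 : ℝ) R,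
              (∫ u in Set.Ioc (0 : ℝ) (s : ℝ), sn l u ^ (n - 1)) /
                sn l (s : ℝ) ^ (n - 1))) *
        ∫⁻ θ, (∫⁻ s in Set.Ioc (0 : ℝ) R, ENNReal.ofReal (ψ s θ * w s θ)) ∂ν := by
  intro R hR
  have hm' : 0 < (ν Set.univ).toReal := ENNReal.toReal_pos hm.ne' (measure_ne_top ν _)
  set m : ℝ := (ν Set.univ).toReal with hmdef
  set y : ℝ → ℝ := yf n l a with hy
  have hy_cont : Continuous y := yf_continuous hl n a
  have hyR_pos : 0 < y R := yf_pos hl n a hR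
  set C : ℝ := ⨆ s : Set.Ioc (0 : ℝ) R,
      (∫ u in Set.Ioc (0 : ℝ) (s : ℝ), sn l u ^ (n - 1)) / sn l (s : ℝ) ^ (n - 1) with hCdef
  have hg_cont : Continuous (fun x : ℝ => sn l x ^ (n - 1)) := (sn_continuous hl).pow _
  have hg_pos : ∀ x : ℝ, 0 < x → 0 < sn l x ^ (n - 1) :=
    fun x hx => pow_pos (sn_pos hl hx) _
  have hg_nonneg : ∀ x : ℝ, 0 ≤ x → 0 ≤ sn l x ^ (n - 1) :=
    fun x hx => pow_nonneg (sn_nonneg hl hx) _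
  -- each ratio term is ≤ R
  have hterm_le : ∀ u : ℝ, u ∈ Set.Ioc (0:ℝ) R →
      (∫ x in Set.Ioc (0:ℝ) u, sn l x ^ (n - 1)) / sn l u ^ (n - 1) ≤ R := by
    intro u hu
    rw [div_le_iff₀ (hg_pos u hu.1)]
    have h1 : (∫ x in Set.Ioc (0:ℝ) u, sn l x ^ (n - 1)) ≤
        ∫ _x in Set.Ioc (0:ℝ) u, sn l u ^ (n - 1) := by
      apply setIntegral_mono_on (hg_cont.integrableOn_Ioc) (integrableOn_const (
        (by rw [Real.volume_Ioc]; exact ENNReal.ofReal_ne_top))) measurableSet_Ioc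
      intro x hx
      exact pow_le_pow_left₀ (sn_nonneg hl hx.1.le) ((sn_mono hl).monotone hx.2) _
    have h2 : (∫ _x in Set.Ioc (0:ℝ) u, sn l u ^ (n - 1)) = u * sn l u ^ (n - 1) := by
      rw [setIntegral_const, Real.volume_real_Ioc_of_le hu.1.le, smul_eq_mul, sub_zero]
    calc (∫ x in Set.Ioc (0:ℝ) u, sn l x ^ (n - 1)) ≤ u * sn l u ^ (n - 1) := h1.trans_eq h2
      _ ≤ R * sn l u ^ (n - 1) :=
        mul_le_mul_of_nonneg_right hu.2 (hg_pos u hu.1).le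
  have hbdd : BddAbove (Set.range fun s : Set.Ioc (0:ℝ) R =>
      (∫ u in Set.Ioc (0 : ℝ) (s : ℝ), sn l u ^ (n - 1)) / sn l (s : ℝ) ^ (n - 1)) := by
    refine ⟨R, ?_⟩
    rintro x ⟨s, rfl⟩
    exact hterm_le s s.2
  have hC_each : ∀ u : ℝ, ∀ hu : u ∈ Set.Ioc (0:ℝ) R,
      (∫ x in Set.Ioc (0:ℝ) u, sn l x ^ (n - 1)) / sn l u ^ (n - 1) ≤ C :=
    fun u hu => le_ciSup hbdd (⟨u, hu⟩ : Set.Ioc (0:ℝ) R)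
  have hSR_pos : 0 < ∫ x in Set.Ioc (0:ℝ) R, sn l x ^ (n - 1) := by
    rw [← intervalIntegral.integral_of_le hR.le]
    exact intervalIntegral.intervalIntegral_pos_of_pos_on (hg_cont.intervalIntegrable 0 R)
      (fun x hx => hg_pos x hx.1) hR
  have hC_pos : 0 < C := by
    have := hC_each R ⟨hR, le_refl R⟩
    exact lt_of_lt_of_le (div_pos hSR_pos (hg_pos R hR)) this
  -- key comparison: ∫ y on (0,u] ≤ C * y u
  have hYC : ∀ u ∈ Set.Ioc (0:ℝ) R, (∫ x in Set.Ioc (0:ℝ) u, y x) ≤ C * y u := by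
    intro u hu
    have h1 : (∫ x in Set.Ioc (0:ℝ) u, y x) ≤
        ∫ x in Set.Ioc (0:ℝ) u, Real.exp (a * u) * sn l x ^ (n - 1) := by
      apply setIntegral_mono_on (hy_cont.integrableOn_Ioc)
        ((hg_cont.integrableOn_Ioc).const_mul _) measurableSet_Ioc
      intro x hx
      show Real.exp (a * x) * sn l x ^ (n - 1) ≤ Real.exp (a * u) * sn l x ^ (n - 1)
      exact mul_le_mul_of_nonneg_right
        (Real.exp_le_exp.2 (mul_le_mul_of_nonneg_left hx.2 ha)) (hg_nonneg x hx.1.le)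
    rw [integral_const_mul] at h1
    have h2 : (∫ x in Set.Ioc (0:ℝ) u, sn l x ^ (n - 1)) ≤ C * sn l u ^ (n - 1) :=
      (div_le_iff₀ (hg_pos u hu.1)).1 (hC_each u hu)
    calc (∫ x in Set.Ioc (0:ℝ) u, y x)
        ≤ Real.exp (a * u) * ∫ x in Set.Ioc (0:ℝ) u, sn l x ^ (n - 1) := h1
      _ ≤ Real.exp (a * u) * (C * sn l u ^ (n - 1)) :=
        mul_le_mul_of_nonneg_left h2 (Real.exp_pos _).le
      _ = C * y u := by rw [hy]; unfold yf; ring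
  -- derivative of va
  set YR : ℝ := ∫ x in Set.Ioc (0:ℝ) R, y x with hYRdef
  have hYR_pos : 0 < YR := by
    rw [hYRdef, ← intervalIntegral.integral_of_le hR.le]
    exact intervalIntegral.intervalIntegral_pos_of_pos_on (hy_cont.intervalIntegrable 0 R)
      (fun x hx => yf_pos hl n a hx.1) hR
  have hYd : HasDerivAt (fun t => ∫ x in Set.Ioc (0:ℝ) t, y x) (y R) R := by
    have hG : HasDerivAt (fun t => ∫ u in (0:ℝ)..t, y u) (y R) R :=
      (hy_cont.integral_hasStrictDerivAt 0 R).hasDerivAt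
    apply hG.congr_of_eventuallyEq
    filter_upwards [Ioi_mem_nhds hR] with t ht
    exact (intervalIntegral.integral_of_le (le_of_lt ht)).symm
  have hva' : HasDerivAt va (m * y R) R := by
    rw [hva]
    exact hYd.const_mul m
  have hvaR : va R = m * YR := by rw [hva]; rfl
  have hva_pos : 0 < va R := by rw [hvaR]; exact mul_pos hm' hYR_pos
  have hderiv : deriv (fun t => V t / va t) R =
      ((∫ θ, w R θ ∂ν) * va R - V R * (m * y R)) / va R ^ 2 :=
    ((hV' R hR).div hva' hva_pos.ne').deriv
  -- nonneg facts
  have hVR_nonneg : 0 ≤ V R := by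
    rw [hV R]
    apply integral_nonneg
    intro θ
    exact setIntegral_nonneg measurableSet_Ioc (fun x hx => hw_nonneg x hx.1 θ)
  set L : ENNReal := ∫⁻ θ, (∫⁻ s in Set.Ioc (0 : ℝ) R, ENNReal.ofReal (ψ s θ * w s θ)) ∂ν
    with hLdef
  have hexpr_pos : 0 < Real.exp (a * R) * sn l R ^ (n - 1) * m / va R ^ 2 * C := by
    have h1 : 0 < Real.exp (a * R) * sn l R ^ (n - 1) :=
      mul_pos (Real.exp_pos _) (hg_pos R hR)
    positivity
  by_cases hL : L = ⊤
  · rw [hL, ENNReal.mul_top (by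
      simp only [ne_eq, ENNReal.ofReal_eq_zero, not_le]
      exact hexpr_pos)]
    exact le_top
  -- finite case
  have hIθ_meas : Measurable fun θ =>
      ∫⁻ s in Set.Ioc (0 : ℝ) R, ENNReal.ofReal (ψ s θ * w s θ) := by
    apply Measurable.lintegral_prod_right'
      (f := fun p : Θ × ℝ => ENNReal.ofReal (ψ p.2 p.1 * w p.2 p.1))
    exact ENNReal.measurable_ofReal.comp
      (((hψ_meas.comp measurable_swap).mul (hw_meas.comp measurable_swap)))
  have hae : ∀ᵐ θ ∂ν,
      (∫⁻ s in Set.Ioc (0 : ℝ) R, ENNReal.ofReal (ψ s θ * w s θ)) < ⊤ :=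
    ae_lt_top hIθ_meas hL
  set Lr : ℝ := L.toReal with hLrdef
  have hLr_nonneg : 0 ≤ Lr := ENNReal.toReal_nonneg
  -- main real inequality
  have hmain : ((∫ θ, w R θ ∂ν) * va R - V R * (m * y R)) / va R ^ 2 ≤
      Real.exp (a * R) * sn l R ^ (n - 1) * m / va R ^ 2 * C * Lr := by
    by_cases hwR : Integrable (fun θ => w R θ) ν
    · -- integrable case
      have haeineq : ∀ᵐ θ ∂ν, w R θ * YR ≤
          y R * (∫ x in Set.Ioc (0:ℝ) R, w x θ) + y R * C *
            (∫⁻ s in Set.Ioc (0 : ℝ) R, ENNReal.ofReal (ψ s θ * w s θ)).toReal := by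
        filter_upwards [hae] with θ hθ
        have hfmeas : Measurable fun r => w r θ :=
          hw_meas.comp (measurable_id.prodMk measurable_const)
        have hpmeas : Measurable fun r => ψ r θ :=
          hψ_meas.comp (measurable_id.prodMk measurable_const)
        have hpf_meas : Measurable fun u => ψ u θ * w u θ := hpmeas.mul hfmeas
        have hEeq : (∫ u in Set.Ioc (0:ℝ) R, ψ u θ * w u θ) =
            (∫⁻ s in Set.Ioc (0 : ℝ) R, ENNReal.ofReal (ψ s θ * w s θ)).toReal := by
          rw [integral_eq_lintegral_of_nonneg_ae]
          · filter_upwards [ae_restrict_mem measurableSet_Ioc] with x hx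
            exact mul_nonneg (hψ_nonneg x hx.1 θ) (hw_nonneg x hx.1 θ)
          · exact hpf_meas.aestronglyMeasurable.restrict
        have hpfint : IntegrableOn (fun u => ψ u θ * w u θ) (Set.Ioc 0 R) := by
          refine ⟨hpf_meas.aestronglyMeasurable.restrict, ?_⟩
          rw [hasFiniteIntegral_iff_norm]
          have heq2 : (∫⁻ u in Set.Ioc (0:ℝ) R, ENNReal.ofReal ‖ψ u θ * w u θ‖) =
              ∫⁻ s in Set.Ioc (0 : ℝ) R, ENNReal.ofReal (ψ s θ * w s θ) := by
            apply lintegral_congr_ae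
            filter_upwards [ae_restrict_mem measurableSet_Ioc] with x hx
            rw [Real.norm_eq_abs, abs_of_nonneg
              (mul_nonneg (hψ_nonneg x hx.1 θ) (hw_nonneg x hx.1 θ))]
          rw [heq2]; exact hθ
        have hkey := key_theta hl hn ha (R := R) (C := C) hR hC_pos.le (hw_C1 θ)
          (fun r hr => hw_nonneg r hr θ) hfmeas hpmeas (fun r hr => hψ_nonneg r hr θ)
          (fun s hs => hmean s hs θ) (hwint θ R hR) hpfint hYC
        rw [← hEeq]
        exact hkey
      have hWθint := hVfin R hR
      have hEint : Integrable (fun θ => (∫⁻ s in Set.Ioc (0 : ℝ) R,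
          ENNReal.ofReal (ψ s θ * w s θ)).toReal) ν :=
        integrable_toReal_of_lintegral_ne_top hIθ_meas.aemeasurable hL
      have h1 : Integrable (fun θ => w R θ * YR) ν := hwR.mul_const _
      have h2 : Integrable (fun θ => y R * (∫ x in Set.Ioc (0:ℝ) R, w x θ) +
          y R * C * (∫⁻ s in Set.Ioc (0 : ℝ) R,
            ENNReal.ofReal (ψ s θ * w s θ)).toReal) ν :=
        (hWθint.const_mul _).add (hEint.const_mul _)
      have hint := integral_mono_ae h1 h2 haeineq
      rw [integral_mul_const] at hint
      rw [integral_add (hWθint.const_mul _) (hEint.const_mul _), integral_const_mul,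
        integral_const_mul, ← hV R] at hint
      have heq3 : (∫ θ, (∫⁻ s in Set.Ioc (0 : ℝ) R,
          ENNReal.ofReal (ψ s θ * w s θ)).toReal ∂ν) = Lr := by
        rw [hLrdef, hLdef]
        exact integral_toReal hIθ_meas.aemeasurable hae
      rw [heq3] at hint
      -- hint : (∫ θ, w R θ ∂ν) * YR ≤ y R * V R + y R * C * Lr
      rw [hvaR]
      have hyRr : Real.exp (a * R) * sn l R ^ (n - 1) = y R := rfl
      rw [hyRr]
      have hYRp := hYR_pos
      have hyRp := hyR_pos
      clear_value Lr L YR C y m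
      have hnum : (∫ θ, w R θ ∂ν) * (m * YR) - V R * (m * y R) ≤
          m * (y R * C * Lr) := by
        have hmul := mul_le_mul_of_nonneg_left hint hm'.le
        nlinarith [hmul]
      have hden : (0:ℝ) < (m * YR) ^ 2 := pow_pos (mul_pos hm' hYRp) 2
      have hfin : y R * m / (m * YR) ^ 2 * C * Lr
          = (m * (y R * C * Lr)) / (m * YR) ^ 2 := by ring
      rw [hfin]
      exact div_le_div_of_nonneg_right hnum hden.le
    · rw [integral_undef hwR]
      have hnum : (0:ℝ) * va R - V R * (m * y R) ≤ 0 := by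
        have := mul_nonneg hVR_nonneg (mul_nonneg hm'.le hyR_pos.le)
        linarith
      have hstep : ((0:ℝ) * va R - V R * (m * y R)) / va R ^ 2 ≤ 0 :=
        div_nonpos_of_nonpos_of_nonneg hnum (sq_nonneg _)
      refine hstep.trans ?_
      exact mul_nonneg hexpr_pos.le hLr_nonneg
  calc ENNReal.ofReal (deriv (fun t => V t / va t) R)
      ≤ ENNReal.ofReal (Real.exp (a * R) * sn l R ^ (n - 1) * m / va R ^ 2 * C * Lr) := by
        apply ENNReal.ofReal_le_ofReal
        rw [hderiv]
        exact hmain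
    _ = ENNReal.ofReal (Real.exp (a * R) * sn l R ^ (n - 1) * m / va R ^ 2 * C) *
        ENNReal.ofReal Lr := ENNReal.ofReal_mul hexpr_pos.le
    _ = ENNReal.ofReal (Real.exp (a * R) * sn l R ^ (n - 1) * m / va R ^ 2 * C) * L := by
        rw [hLrdef, ENNReal.ofReal_toReal hL]
end
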